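/- arXiv:1509.07482 — 5 statements merged into one kernel-verified Lean document; each statement's English description precedes it below -/
import Mathlib

section
/- The ternary quartic form p_3(x,y,z) = 4(x^4 + y^4 + z^4) - 17(x^2 y^2 + x^2 z^2 + y^2 z^2) is irreducible over the real numbers. -/
open MvPolynomial

noncomputable def p3 : MvPolynomial (Fin 3) ℝ :=
  4 * (X 0 ^ 4 + X 1 ^ 4 + X 2 ^ 4)
    - 17 * (X 0 ^ 2 * X 1 ^ 2 + X 0 ^ 2 * X 2 ^ 2 + X 1 ^ 2 * X 2 ^ 2)

/-!
Factors of a homogeneous polynomial are homogeneous: `f ↦ f(t • x)` is multiplicative, sends a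
form of degree `n` to a multiple of `tⁿ`, and in a polynomial ring over a domain the factors of a
monomial are monomials. So a factorization of the quartic `p3` has degrees `1 + 3` or `2 + 2`.

A linear factor `ax + by + cz` makes `p3` vanish at `(c, 0, -a)`, `(0, c, -b)`, `(b, -a, 0)`. As
`p3(u, 0, v) = (4u² - v²)(u² - 4v²)`, any two of `a², b², c²` then have ratio `4` or `1/4`, which is
impossible around the triangle unless all three vanish.

For two quadratic forms `f`, `g`, compare coefficients on lines. A cross term `fᵢⱼ ≠ 0` forces the
other two cross terms of `f` to vanish and then `fᵢgₖ = fₖgᵢ` (k the third index); together with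
`(fᵢgₖ)(fₖgᵢ) = (fᵢgᵢ)(fₖgₖ) = 16` this contradicts `fᵢgₖ + fₖgᵢ = -17`. Without cross terms,
`fᵢgⱼ + fⱼgᵢ = -17` and `(fᵢgⱼ)(fⱼgᵢ) = 16` make every `fᵢgⱼ` (i ≠ j) negative, while the cyclic
product `(f₁g₂)(f₂g₃)(f₃g₁) = (f₁g₁)(f₂g₂)(f₃g₃) = 64` is positive.
-/

namespace Polynomial

theorem natTrailingDegree_eq_natDegree_of_mul {R : Type*} [Semiring R] [NoZeroDivisors R]
    {p q : R[X]} (hp : p ≠ 0) (hq : q ≠ 0)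
    (h : (p * q).natTrailingDegree = (p * q).natDegree) :
    p.natTrailingDegree = p.natDegree := by
  rw [natTrailingDegree_mul hp hq, natDegree_mul hp hq] at h
  have := natTrailingDegree_le_natDegree p
  have := natTrailingDegree_le_natDegree q
  omega

end Polynomial

namespace MvPolynomial

variable {σ R : Type*} [CommSemiring R]

/-- `f ↦ f(t • x)`, a polynomial in `t`. -/
noncomputable def scaleVars : MvPolynomial σ R →ₐ[R] Polynomial (MvPolynomial σ R) :=
  aeval fun i => Polynomial.C (X i) * Polynomial.X

lemma scaleVars_monomial (d : σ →₀ ℕ) (c : R) :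
    scaleVars (monomial d c) = Polynomial.monomial d.degree (monomial d c) := by
  rw [scaleVars, aeval_monomial, ← Polynomial.C_mul_X_pow_eq_monomial, monomial_eq,
    Finsupp.degree_apply]
  simp only [mul_pow, ← map_pow, Finsupp.prod, Finset.prod_mul_distrib, ← map_prod,
    Finset.prod_pow_eq_pow_sum, map_mul, Polynomial.algebraMap_apply, algebraMap_eq, mul_assoc]

lemma coeff_scaleVars (f : MvPolynomial σ R) (k : ℕ) :
    (scaleVars f).coeff k = homogeneousComponent k f := by
  induction f using MvPolynomial.induction_on' with
  | add p q hp hq => simp [hp, hq]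
  | monomial d c =>
    rw [scaleVars_monomial, Polynomial.coeff_monomial,
      homogeneousComponent_of_mem (isHomogeneous_monomial c rfl)]
    simp [eq_comm]

lemma eval_one_scaleVars (f : MvPolynomial σ R) : (scaleVars f).eval 1 = f := by
  induction f using MvPolynomial.induction_on <;> simp_all [scaleVars]

lemma scaleVars_ne_zero {f : MvPolynomial σ R} (hf : f ≠ 0) : scaleVars f ≠ 0 := fun h =>
  hf (by rw [← eval_one_scaleVars f, h, Polynomial.eval_zero])

lemma IsHomogeneous.scaleVars_eq {f : MvPolynomial σ R} {n : ℕ} (hf : f.IsHomogeneous n) :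
    scaleVars f = Polynomial.monomial n f := by
  ext1 k
  rw [coeff_scaleVars, homogeneousComponent_of_mem hf, Polynomial.coeff_monomial]
  simp [eq_comm]

lemma isHomogeneous_of_homogeneousComponent_eq_zero {f : MvPolynomial σ R} {n : ℕ}
    (h : ∀ k ≠ n, homogeneousComponent k f = 0) : f.IsHomogeneous n := by
  intro d hd
  by_contra hne
  apply hd
  simpa [coeff_homogeneousComponent, Finsupp.degree_eq_weight_one, Pi.one_def] using
    congrArg (coeff d) (h _ hne)

theorem IsHomogeneous.exists_isHomogeneous_left [NoZeroDivisors R] {f g : MvPolynomial σ R}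
    {n : ℕ} (h : (f * g).IsHomogeneous n) (hg : g ≠ 0) : ∃ m, f.IsHomogeneous m := by
  rcases eq_or_ne f 0 with rfl | hf
  · exact ⟨0, isHomogeneous_zero _ _ _⟩
  have hfg : (scaleVars f * scaleVars g).natTrailingDegree =
      (scaleVars f * scaleVars g).natDegree := by
    rw [← map_mul, h.scaleVars_eq, Polynomial.natTrailingDegree_monomial (mul_ne_zero hf hg),
      Polynomial.natDegree_monomial_eq _ (mul_ne_zero hf hg)]
  have hf' := Polynomial.natTrailingDegree_eq_natDegree_of_mul (scaleVars_ne_zero hf)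
    (scaleVars_ne_zero hg) hfg
  refine ⟨(scaleVars f).natDegree, isHomogeneous_of_homogeneousComponent_eq_zero fun k hk => ?_⟩
  rw [← coeff_scaleVars]
  rcases hk.lt_or_gt with hk | hk
  · exact Polynomial.coeff_eq_zero_of_lt_natTrailingDegree (hf' ▸ hk)
  · exact Polynomial.coeff_eq_zero_of_natDegree_lt hk

theorem irreducible_of_isHomogeneous {K : Type*} [Field K] {p : MvPolynomial σ K} {n : ℕ}
    (hp : p.IsHomogeneous n) (hn : n ≠ 0) (hp0 : p ≠ 0)
    (h : ∀ (f g : MvPolynomial σ K) (a b : ℕ), f.IsHomogeneous a → g.IsHomogeneous b →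
      0 < a → 0 < b → a + b = n → f * g ≠ p) :
    Irreducible p := by
  have isUnit_of_isHomogeneous_zero {f : MvPolynomial σ K} (hf : f.IsHomogeneous 0)
      (hf0 : f ≠ 0) : IsUnit f := by
    have hC := totalDegree_eq_zero_iff_eq_C.1 (hf.totalDegree hf0)
    rw [hC] at hf0 ⊢
    exact (C_ne_zero.1 hf0).isUnit.map C
  refine ⟨fun hu => hn ?_, fun f g hfg => ?_⟩
  · rw [← hp.totalDegree hp0]
    exact (isUnit_iff_totalDegree_of_isReduced.1 hu).2
  have hf : f ≠ 0 := by rintro rfl; simp_all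
  have hg : g ≠ 0 := by rintro rfl; simp_all
  obtain ⟨a, ha⟩ := (hfg ▸ hp).exists_isHomogeneous_left hg
  obtain ⟨b, hb⟩ := (mul_comm f g ▸ hfg ▸ hp).exists_isHomogeneous_left hf
  have hab : a + b = n := (ha.mul hb).inj_right (hfg ▸ hp) (mul_ne_zero hf hg)
  by_contra hunit
  rw [not_or] at hunit
  refine h f g a b ha hb (Nat.pos_of_ne_zero ?_) (Nat.pos_of_ne_zero ?_) hab hfg.symm
  · rintro rfl; exact hunit.1 (isUnit_of_isHomogeneous_zero ha hf)
  · rintro rfl; exact hunit.2 (isUnit_of_isHomogeneous_zero hb hg)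

variable [Fintype σ]

theorem IsHomogeneous.exists_eq_sum_smul_X {f : MvPolynomial σ R} (hf : f.IsHomogeneous 1) :
    ∃ c : σ → R, ∑ i, c i • X i = f := by
  rwa [← mem_homogeneousSubmodule, homogeneousSubmodule_one_eq_span_X,
    Submodule.mem_span_range_iff_exists_fun] at hf

theorem IsHomogeneous.exists_eq_sum_smul_X_mul_X {f : MvPolynomial σ R}
    (hf : f.IsHomogeneous 2) : ∃ c : σ × σ → R, ∑ ij, c ij • (X ij.1 * X ij.2) = f := by
  rwa [← mem_homogeneousSubmodule, ← homogeneousSubmodule_one_pow,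
    homogeneousSubmodule_one_eq_span_X, pow_two, Submodule.span_mul_span, ← Set.image2_mul,
    Set.image2_range, Submodule.mem_span_range_iff_exists_fun] at hf

end MvPolynomial

theorem coeffs_eq_of_forall_eq_mul {K : Type*} [Field K] [CharZero K] (A B C D E F α β γ : K)
    (h : ∀ t, α + β * t ^ 2 + γ * t ^ 4 = (A + B * t + C * t ^ 2) * (D + E * t + F * t ^ 2)) :
    A * D = α ∧ A * E + B * D = 0 ∧ A * F + B * E + C * D = β ∧ B * F + C * E = 0 ∧
      C * F = γ := by
  have h0 := h 0
  have h1 := h 1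
  have h1' := h (-1)
  have h2 := h 2
  have h2' := h (-2)
  refine ⟨by linear_combination -h0, ?_, ?_, ?_, ?_⟩
  · linear_combination (-2/3 : K) * (h1 - h1') + (1/12 : K) * (h2 - h2')
  · linear_combination (-2/3 : K) * (h1 + h1') + (1/24 : K) * (h2 + h2') + (5/4 : K) * h0
  · linear_combination (1/6 : K) * (h1 - h1') - (1/12 : K) * (h2 - h2')
  · linear_combination (1/6 : K) * (h1 + h1') - (1/24 : K) * (h2 + h2') - (1/4 : K) * h0

def p3Fun (x y z : ℝ) : ℝ :=
  4 * (x ^ 4 + y ^ 4 + z ^ 4) - 17 * (x ^ 2 * y ^ 2 + x ^ 2 * z ^ 2 + y ^ 2 * z ^ 2)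

theorem not_forall_p3Fun_eq_linear_mul (a b c : ℝ) (G : ℝ → ℝ → ℝ → ℝ) :
    ¬ ∀ x y z, p3Fun x y z = (a * x + b * y + c * z) * G x y z := by
  intro h
  simp only [p3Fun] at h
  have hac : (4 * a ^ 2 - c ^ 2) * (a ^ 2 - 4 * c ^ 2) = 0 := by linear_combination h c 0 (-a)
  have hbc : (4 * b ^ 2 - c ^ 2) * (b ^ 2 - 4 * c ^ 2) = 0 := by linear_combination h 0 c (-b)
  have hab : (4 * a ^ 2 - b ^ 2) * (a ^ 2 - 4 * b ^ 2) = 0 := by linear_combination h b (-a) 0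
  have hsq : a ^ 2 = 0 ∧ b ^ 2 = 0 ∧ c ^ 2 = 0 := by
    rcases mul_eq_zero.1 hac with h₁ | h₁ <;> rcases mul_eq_zero.1 hbc with h₂ | h₂ <;>
      rcases mul_eq_zero.1 hab with h₃ | h₃ <;> refine ⟨?_, ?_, ?_⟩ <;> linarith
  simp only [pow_eq_zero_iff two_ne_zero] at hsq
  obtain ⟨rfl, rfl, rfl⟩ := hsq
  have := h 1 0 0
  norm_num at this

structure TernaryQuadratic where
  c₁ : ℝ
  c₂ : ℝ
  c₃ : ℝ
  c₁₂ : ℝ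
  c₁₃ : ℝ
  c₂₃ : ℝ

namespace TernaryQuadratic

def eval (q : TernaryQuadratic) (x y z : ℝ) : ℝ :=
  q.c₁ * x ^ 2 + q.c₂ * y ^ 2 + q.c₃ * z ^ 2 + q.c₁₂ * x * y + q.c₁₃ * x * z + q.c₂₃ * y * z

def swap₂₃ (q : TernaryQuadratic) : TernaryQuadratic := ⟨q.c₁, q.c₃, q.c₂, q.c₁₃, q.c₁₂, q.c₂₃⟩

def swap₁₃ (q : TernaryQuadratic) : TernaryQuadratic := ⟨q.c₃, q.c₂, q.c₁, q.c₂₃, q.c₁₃, q.c₁₂⟩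

lemma eval_swap₂₃ (q : TernaryQuadratic) (x y z : ℝ) : q.swap₂₃.eval x y z = q.eval x z y := by
  simp only [eval, swap₂₃]; ring

lemma eval_swap₁₃ (q : TernaryQuadratic) (x y z : ℝ) : q.swap₁₃.eval x y z = q.eval z y x := by
  simp only [eval, swap₁₃]; ring

variable {f g : TernaryQuadratic}

-- `hijk` is the comparison of the coefficients of `xⁱyʲzᵏ` in `p3Fun` and `f.eval * g.eval`.
theorem c₁₂_eq_zero_of_coeff_eqs
    (h400 : f.c₁ * g.c₁ = 4) (h040 : f.c₂ * g.c₂ = 4) (h004 : f.c₃ * g.c₃ = 4)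
    (h310 : f.c₁ * g.c₁₂ + f.c₁₂ * g.c₁ = 0) (h130 : f.c₂ * g.c₁₂ + f.c₁₂ * g.c₂ = 0)
    (h301 : f.c₁ * g.c₁₃ + f.c₁₃ * g.c₁ = 0) (h031 : f.c₂ * g.c₂₃ + f.c₂₃ * g.c₂ = 0)
    (h202 : f.c₁ * g.c₃ + f.c₃ * g.c₁ + f.c₁₃ * g.c₁₃ = -17)
    (h211 : f.c₁ * g.c₂₃ + f.c₂₃ * g.c₁ + f.c₁₂ * g.c₁₃ + f.c₁₃ * g.c₁₂ = 0)
    (h121 : f.c₂ * g.c₁₃ + f.c₁₃ * g.c₂ + f.c₁₂ * g.c₂₃ + f.c₂₃ * g.c₁₂ = 0)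
    (h112 : f.c₃ * g.c₁₂ + f.c₁₂ * g.c₃ + f.c₁₃ * g.c₂₃ + f.c₂₃ * g.c₁₃ = 0) :
    f.c₁₂ = 0 := by
  obtain ⟨a₁, a₂, a₃, a₁₂, a₁₃, a₂₃⟩ := f
  obtain ⟨b₁, b₂, b₃, b₁₂, b₁₃, b₂₃⟩ := g
  dsimp only at *
  by_contra ha₁₂
  have ne_zero {u v : ℝ} (h : u * v = 4) : u ≠ 0 ∧ v ≠ 0 :=
    mul_ne_zero_iff.1 (by rw [h]; norm_num)
  obtain ⟨ha₁, hb₁⟩ := ne_zero h400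
  obtain ⟨ha₂, hb₂⟩ := ne_zero h040
  have h₁₂ : a₂ * b₁ = a₁ * b₂ := by
    have : a₁₂ * (a₂ * b₁ - a₁ * b₂) = 0 := by linear_combination a₂ * h310 - a₁ * h130
    linear_combination (mul_eq_zero.1 this).resolve_left ha₁₂
  have ha₁₃ : a₁₃ = 0 := by
    have : a₂ * a₁₂ * a₁₃ * b₁ = 0 := by
      linear_combination (-1/2 : ℝ) * (a₁ * a₂ * h211 - a₂ * a₁₂ * h301 - a₂ * a₁₃ * h310
        - a₁ ^ 2 * h031 - a₁ * a₂₃ * h₁₂)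
    simpa [ha₂, ha₁₂, hb₁] using this
  have ha₂₃ : a₂₃ = 0 := by
    have : a₁ * a₁₂ * a₂₃ * b₂ = 0 := by
      linear_combination (-1/2 : ℝ) * (a₁ * a₂ * h121 - a₁ * a₁₂ * h031 - a₁ * a₂₃ * h130
        - a₂ ^ 2 * h301 + a₂ * a₁₃ * h₁₂)
    simpa [ha₁, ha₁₂, hb₂] using this
  subst ha₁₃ ha₂₃
  have h₁₃ : a₁ * b₃ = a₃ * b₁ := by
    have : a₁₂ * (a₁ * b₃ - a₃ * b₁) = 0 := by linear_combination a₁ * h112 - a₃ * h310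
    linear_combination (mul_eq_zero.1 this).resolve_left ha₁₂
  have : (a₁ * b₃) ^ 2 = 16 := by linear_combination a₁ * b₃ * h₁₃ + a₃ * b₃ * h400 + 4 * h004
  nlinarith

theorem c₁₂_eq_zero (h : ∀ x y z, p3Fun x y z = f.eval x y z * g.eval x y z) : f.c₁₂ = 0 := by
  simp only [p3Fun, eval] at h
  obtain ⟨h400, h310, -, h130, h040⟩ := coeffs_eq_of_forall_eq_mul f.c₁ f.c₁₂ f.c₂ g.c₁ g.c₁₂ g.c₂
    4 (-17) 4 fun t => by linear_combination h 1 t 0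
  obtain ⟨-, h301, h202, h103, h004⟩ := coeffs_eq_of_forall_eq_mul f.c₁ f.c₁₃ f.c₃ g.c₁ g.c₁₃ g.c₃
    4 (-17) 4 fun t => by linear_combination h 1 0 t
  obtain ⟨-, h031, -, h013, -⟩ := coeffs_eq_of_forall_eq_mul f.c₂ f.c₂₃ f.c₃ g.c₂ g.c₂₃ g.c₃
    4 (-17) 4 fun t => by linear_combination h 0 1 t
  obtain ⟨-, s₁, -⟩ := coeffs_eq_of_forall_eq_mul (f.c₂ + f.c₃ + f.c₂₃) (f.c₁₂ + f.c₁₃) f.c₁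
    (g.c₂ + g.c₃ + g.c₂₃) (g.c₁₂ + g.c₁₃) g.c₁ (-9) (-34) 4 fun t => by linear_combination h t 1 1
  obtain ⟨-, s₂, -⟩ := coeffs_eq_of_forall_eq_mul (f.c₂ + f.c₃ - f.c₂₃) (f.c₁₂ - f.c₁₃) f.c₁
    (g.c₂ + g.c₃ - g.c₂₃) (g.c₁₂ - g.c₁₃) g.c₁ (-9) (-34) 4 fun t => by
      linear_combination h t 1 (-1)
  obtain ⟨-, s₃, -⟩ := coeffs_eq_of_forall_eq_mul (f.c₁ + f.c₃ + f.c₁₃) (f.c₁₂ + f.c₂₃) f.c₂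
    (g.c₁ + g.c₃ + g.c₁₃) (g.c₁₂ + g.c₂₃) g.c₂ (-9) (-34) 4 fun t => by linear_combination h 1 t 1
  have h112 : f.c₃ * g.c₁₂ + f.c₁₂ * g.c₃ + f.c₁₃ * g.c₂₃ + f.c₂₃ * g.c₁₃ = 0 := by
    linear_combination (s₁ + s₂) / 2 - h130
  have h121 : f.c₂ * g.c₁₃ + f.c₁₃ * g.c₂ + f.c₁₂ * g.c₂₃ + f.c₂₃ * g.c₁₂ = 0 := by
    linear_combination (s₁ - s₂) / 2 - h103
  have h211 : f.c₁ * g.c₂₃ + f.c₂₃ * g.c₁ + f.c₁₂ * g.c₁₃ + f.c₁₃ * g.c₁₂ = 0 := by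
    linear_combination s₃ - h310 - h013 - h112
  exact c₁₂_eq_zero_of_coeff_eqs h400 h040 h004 h310 (by linear_combination h130) h301 h031
    (by linear_combination h202) h211 h121 h112

theorem false_of_cross_eq_zero (h : ∀ x y z, p3Fun x y z = f.eval x y z * g.eval x y z)
    (h₁₂ : f.c₁₂ = 0) (h₁₃ : f.c₁₃ = 0) (h₂₃ : f.c₂₃ = 0) : False := by
  simp only [p3Fun, eval, h₁₂, h₁₃, h₂₃] at h
  obtain ⟨h400, -, h220, -, h040⟩ := coeffs_eq_of_forall_eq_mul f.c₁ 0 f.c₂ g.c₁ g.c₁₂ g.c₂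
    4 (-17) 4 fun t => by linear_combination h 1 t 0
  obtain ⟨-, -, h202, -, h004⟩ := coeffs_eq_of_forall_eq_mul f.c₁ 0 f.c₃ g.c₁ g.c₁₃ g.c₃
    4 (-17) 4 fun t => by linear_combination h 1 0 t
  obtain ⟨-, -, h022, -, -⟩ := coeffs_eq_of_forall_eq_mul f.c₂ 0 f.c₃ g.c₂ g.c₂₃ g.c₃
    4 (-17) 4 fun t => by linear_combination h 0 1 t
  have neg_of {u v : ℝ} (huv : u * v = 16) (h : u + v = -17) : u < 0 := by nlinarith
  have n₁₂ : f.c₁ * g.c₂ < 0 :=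
    neg_of (v := f.c₂ * g.c₁) (by linear_combination f.c₂ * g.c₂ * h400 + 4 * h040)
      (by linear_combination h220)
  have n₂₃ : f.c₂ * g.c₃ < 0 :=
    neg_of (v := f.c₃ * g.c₂) (by linear_combination f.c₃ * g.c₃ * h040 + 4 * h004)
      (by linear_combination h022)
  have n₃₁ : f.c₃ * g.c₁ < 0 :=
    neg_of (v := f.c₁ * g.c₃) (by linear_combination f.c₃ * g.c₃ * h400 + 4 * h004)
      (by linear_combination h202)
  have cyclic : (f.c₁ * g.c₂) * (f.c₂ * g.c₃) * (f.c₃ * g.c₁) = 64 := by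
    linear_combination f.c₂ * g.c₂ * f.c₃ * g.c₃ * h400 + 4 * f.c₃ * g.c₃ * h040 + 16 * h004
  linarith [mul_neg_of_pos_of_neg (mul_pos_of_neg_of_neg n₁₂ n₂₃) n₃₁]

theorem exists_eval_eq_of_isHomogeneous {q : MvPolynomial (Fin 3) ℝ} (hq : q.IsHomogeneous 2) :
    ∃ Q : TernaryQuadratic, ∀ x y z, MvPolynomial.eval ![x, y, z] q = Q.eval x y z := by
  obtain ⟨c, rfl⟩ := hq.exists_eq_sum_smul_X_mul_X
  refine ⟨⟨c (0, 0), c (1, 1), c (2, 2), c (0, 1) + c (1, 0), c (0, 2) + c (2, 0),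
    c (1, 2) + c (2, 1)⟩, fun x y z => ?_⟩
  simp [Fintype.sum_prod_type, Fin.sum_univ_three, eval]
  ring

theorem not_forall_p3Fun_eq_mul (f g : TernaryQuadratic) :
    ¬ ∀ x y z, p3Fun x y z = f.eval x y z * g.eval x y z := by
  intro h
  have h₂₃ (x y z : ℝ) : p3Fun x y z = f.swap₂₃.eval x y z * g.swap₂₃.eval x y z := by
    rw [eval_swap₂₃, eval_swap₂₃, ← h, p3Fun, p3Fun]; ring
  have h₁₃ (x y z : ℝ) : p3Fun x y z = f.swap₁₃.eval x y z * g.swap₁₃.eval x y z := by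
    rw [eval_swap₁₃, eval_swap₁₃, ← h, p3Fun, p3Fun]; ring
  exact false_of_cross_eq_zero h (c₁₂_eq_zero h) (c₁₂_eq_zero h₂₃) (c₁₂_eq_zero h₁₃)

end TernaryQuadratic

lemma eval_p3 (x y z : ℝ) : eval ![x, y, z] p3 = p3Fun x y z := by
  simp [p3, p3Fun]

lemma p3_ne_zero : p3 ≠ 0 := by
  intro h
  have := eval_p3 1 0 0
  norm_num [h, p3Fun] at this

lemma isHomogeneous_p3 : p3.IsHomogeneous 4 := by
  have hX (i : Fin 3) (k : ℕ) : (X i ^ k : MvPolynomial (Fin 3) ℝ).IsHomogeneous k :=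
    isHomogeneous_X_pow i k
  rw [p3, ← map_ofNat C 4, ← map_ofNat C 17]
  exact ((((hX 0 4).add (hX 1 4)).add (hX 2 4)).C_mul 4).sub
    (((((hX 0 2).mul (hX 1 2)).add ((hX 0 2).mul (hX 2 2))).add ((hX 1 2).mul (hX 2 2))).C_mul 17)

theorem isHomogeneous_one_mul_ne_p3 {ℓ g : MvPolynomial (Fin 3) ℝ} (hℓ : ℓ.IsHomogeneous 1) :
    ℓ * g ≠ p3 := by
  intro hp
  obtain ⟨c, rfl⟩ := hℓ.exists_eq_sum_smul_X
  refine not_forall_p3Fun_eq_linear_mul (c 0) (c 1) (c 2) (fun x y z => eval ![x, y, z] g)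
    fun x y z => ?_
  rw [← eval_p3, ← hp, map_mul]
  simp [Fin.sum_univ_three]

theorem isHomogeneous_two_mul_ne_p3 {f g : MvPolynomial (Fin 3) ℝ} (hf : f.IsHomogeneous 2)
    (hg : g.IsHomogeneous 2) : f * g ≠ p3 := by
  intro hp
  obtain ⟨F, hF⟩ := TernaryQuadratic.exists_eval_eq_of_isHomogeneous hf
  obtain ⟨G, hG⟩ := TernaryQuadratic.exists_eval_eq_of_isHomogeneous hg
  exact TernaryQuadratic.not_forall_p3Fun_eq_mul F G fun x y z => by
    rw [← eval_p3, ← hp, map_mul, hF, hG]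

theorem p3_irreducible : Irreducible p3 := by
  refine irreducible_of_isHomogeneous isHomogeneous_p3 four_ne_zero p3_ne_zero
    fun f g a b hf hg ha hb hab => ?_
  obtain ⟨rfl, rfl⟩ | ⟨rfl, rfl⟩ | ⟨rfl, rfl⟩ : a = 1 ∧ b = 3 ∨ a = 2 ∧ b = 2 ∨ a = 3 ∧ b = 1 := by
    omega
  · exact isHomogeneous_one_mul_ne_p3 hf
  · exact isHomogeneous_two_mul_ne_p3 hf hg
  · rw [mul_comm]
    exact isHomogeneous_one_mul_ne_p3 hg
end

section
/- Let f be a positive semidefinite n-ary form of degree 2d that is not a sum of squares of forms, and let p be an irreducible indefinite form of degree r in ℝ[x_1,…,x_n] (i.e., p takes both positive and negative values). Then the form p^2 f of degree 2d+2r is positive semidefinite and not a sum of squares of forms. -/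
/-!
If `p²f = ∑ hᵢ²`, every `hᵢ` vanishes on the real zero set of `p`. An irreducible polynomial
that changes sign divides every polynomial vanishing on its real zeros: after a linear change of
coordinates `p` changes sign along a line in the direction of `x₀`, and we view `p` and `h` as
polynomials in `x₀` over `R₀ = ℝ[x₁, …, xₙ₋₁]`. If `p ∤ h`, then by Gauss's lemma they are coprime
over `Frac R₀`, so some nonzero `c ∈ R₀` lies in the ideal `(p, h)`. But the sign change persists
on an open set of `y ∈ ℝⁿ⁻¹`, and for each such `y` the intermediate value theorem gives a
common real zero `(t, y)` of `p` and `h`, so `c` vanishes on an open set, which is absurd.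
Hence `hᵢ = p gᵢ` with forms `gᵢ`, and cancelling `p²` exhibits `f` as a sum of squares.
-/

open MvPolynomial Finset

/-- A sum of squares of forms (homogeneous polynomials). -/
def IsSosForms {n : ℕ} (f : MvPolynomial (Fin n) ℝ) : Prop :=
  ∃ (k : ℕ) (h : Fin k → MvPolynomial (Fin n) ℝ),
    (∀ i, ∃ d, (h i).IsHomogeneous d) ∧ f = ∑ i, h i ^ 2

namespace Polynomial

theorem exists_mul_add_mul_eq_C_of_isCoprime_map {R K : Type*} [CommRing R] [IsDomain R] [Field K]
    [Algebra R K] [IsFractionRing R K] {P Q : R[X]}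
    (h : IsCoprime (P.map (algebraMap R K)) (Q.map (algebraMap R K))) :
    ∃ c ≠ (0 : R), ∃ U V : R[X], U * P + V * Q = C c := by
  obtain ⟨U, V, hUV⟩ := h
  obtain ⟨a, ha, hU⟩ := IsLocalization.integerNormalization_spec (nonZeroDivisors R) U
  obtain ⟨b, hb, hV⟩ := IsLocalization.integerNormalization_spec (nonZeroDivisors R) V
  refine ⟨a * b, mul_ne_zero (nonZeroDivisors.ne_zero ha) (nonZeroDivisors.ne_zero hb),
    IsLocalization.integerNormalization (nonZeroDivisors R) U * C b,
    IsLocalization.integerNormalization (nonZeroDivisors R) V * C a, ?_⟩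
  apply map_injective _ (IsFractionRing.injective R K)
  simp only [Polynomial.map_add, Polynomial.map_mul, Polynomial.map_C, hU, hV, map_mul,
    Algebra.smul_def, algebraMap_apply]
  linear_combination C (algebraMap R K a) * C (algebraMap R K b) * hUV

end Polynomial

namespace MvPolynomial

section Homogeneous

attribute [local instance] MvPolynomial.gradedAlgebra

variable {σ R : Type*} [CommSemiring R] {p g : MvPolynomial σ R} {r : ℕ}

theorem IsHomogeneous.homogeneousComponent_mul_left (hp : p.IsHomogeneous r) (g : MvPolynomial σ R)
    (k : ℕ) : homogeneousComponent (r + k) (p * g) = p * homogeneousComponent k g := by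
  rw [← decomposition.decompose'_apply, ← decomposition.decompose'_apply]
  exact DirectSum.coe_decompose_mul_add_of_left_mem (homogeneousSubmodule σ R) hp

theorem IsHomogeneous.of_mul_left [NoZeroDivisors R] {D : ℕ} (hp : p.IsHomogeneous r)
    (hp0 : p ≠ 0) (hpg : (p * g).IsHomogeneous D) : g.IsHomogeneous (D - r) := by
  intro d hd
  have hcomp : homogeneousComponent d.degree g ≠ 0 := fun h ↦ hd <| by
    simpa [coeff_homogeneousComponent] using congr(coeff d $h)
  have hdeg : r + d.degree = D := by
    by_contra hne
    have := hp.homogeneousComponent_mul_left g d.degree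
    rw [homogeneousComponent_of_mem hpg, if_neg hne] at this
    exact hcomp ((mul_eq_zero.mp this.symm).resolve_left hp0)
  rw [Pi.one_def, ← Finsupp.degree_eq_weight_one]
  omega

end Homogeneous

theorem eq_zero_of_forall_eval_eq_zero_of_isOpen {σ : Type*} [Fintype σ] {q : MvPolynomial σ ℝ}
    {U : Set (σ → ℝ)} (hU : IsOpen U) (hne : U.Nonempty) (h : ∀ x ∈ U, eval x q = 0) :
    q = 0 := by
  obtain ⟨x₀, hx₀⟩ := hne
  obtain ⟨ε, hε, hball⟩ := Metric.isOpen_iff.mp hU x₀ hx₀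
  refine funext_set (fun i ↦ Metric.ball (x₀ i) ε) (fun i ↦ ?_) fun x hx ↦ ?_
  · rw [Real.ball_eq_Ioo]
    exact Set.Ioo_infinite (by linarith)
  · rw [map_zero]
    exact h x (hball (by rwa [ball_pi x₀ hε]))

section LinearChange

variable {K σ : Type*} [Field K] [Fintype σ] [DecidableEq σ]

noncomputable def linearSubst (L : (σ → K) →ₗ[K] σ → K) : MvPolynomial σ K →ₐ[K] MvPolynomial σ K :=
  bind₁ fun i ↦ ∑ j, C (LinearMap.toMatrix' L i j) * X j

theorem eval_linearSubst (L : (σ → K) →ₗ[K] σ → K) (x : σ → K) (q : MvPolynomial σ K) :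
    eval x (linearSubst L q) = eval (L x) q := by
  change aeval x (bind₁ _ q) = aeval (L x) q
  rw [aeval_bind₁]
  congr 1
  ext i
  rw [← LinearMap.toMatrix'_mulVec]
  simp only [map_sum, map_mul, aeval_C, aeval_X, Algebra.algebraMap_self, RingHom.id_apply,
    Matrix.mulVec, dotProduct]

variable [Infinite K]

noncomputable def linearSubstEquiv (L : (σ → K) ≃ₗ[K] σ → K) :
    MvPolynomial σ K ≃ₐ[K] MvPolynomial σ K :=
  AlgEquiv.ofAlgHom (linearSubst L) (linearSubst L.symm.toLinearMap)
    (AlgHom.ext fun q ↦ funext fun x ↦ by simp [eval_linearSubst])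
    (AlgHom.ext fun q ↦ funext fun x ↦ by simp [eval_linearSubst])

theorem eval_linearSubstEquiv (L : (σ → K) ≃ₗ[K] σ → K) (x : σ → K) (q : MvPolynomial σ K) :
    eval x (linearSubstEquiv L q) = eval (L x) q :=
  eval_linearSubst _ x q

end LinearChange

variable {m : ℕ}

theorem exists_eval_cons_eq_zero (p : MvPolynomial (Fin (m + 1)) ℝ) {y : Fin m → ℝ} {α β : ℝ}
    (hα : 0 < eval (Fin.cons α y) p) (hβ : eval (Fin.cons β y) p < 0) :
    ∃ t, eval (Fin.cons t y) p = 0 := by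
  simp only [eval_eq_eval_mv_eval'] at hα hβ ⊢
  exact intermediate_value_uIcc (Polynomial.continuous _).continuousOn
    (Set.mem_uIcc.mpr (Or.inr ⟨hβ.le, hα.le⟩)) |>.imp fun _ ↦ And.right

theorem isOpen_setOf_sign_change (p : MvPolynomial (Fin (m + 1)) ℝ) (α β : ℝ) :
    IsOpen {y : Fin m → ℝ | 0 < eval (Fin.cons α y) p ∧ eval (Fin.cons β y) p < 0} := by
  have hcont (t : ℝ) : Continuous fun y : Fin m → ℝ ↦ eval (Fin.cons t y) p :=
    p.continuous_eval.comp (continuous_const.finCons continuous_id)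
  exact (isOpen_lt continuous_const (hcont α)).inter (isOpen_lt (hcont β) continuous_const)

theorem dvd_of_eval_eq_zero_of_sign_change_cons {p h : MvPolynomial (Fin (m + 1)) ℝ}
    (hp : Irreducible p) {y : Fin m → ℝ} {α β : ℝ}
    (hα : 0 < eval (Fin.cons α y) p) (hβ : eval (Fin.cons β y) p < 0)
    (hvan : ∀ x, eval x p = 0 → eval x h = 0) : p ∣ h := by
  set P := finSuccEquiv ℝ m p with hP
  set Q := finSuccEquiv ℝ m h with hQ
  have hPirr : Irreducible P := hp.map _
  have hPdeg : P.natDegree ≠ 0 := fun h0 ↦ by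
    rw [eval_eq_eval_mv_eval', ← hP, Polynomial.eq_C_of_natDegree_eq_zero h0] at hα hβ
    simp only [Polynomial.map_C, Polynomial.eval_C] at hα hβ
    linarith
  have hPprim : P.IsPrimitive := hPirr.isPrimitive hPdeg
  suffices P ∣ Q from (map_dvd_iff (finSuccEquiv ℝ m)).mp this
  let K := FractionRing (MvPolynomial (Fin m) ℝ)
  rw [hPprim.dvd_iff_fraction_map_dvd_fraction_map K]
  by_contra hndvd
  have hPirrK := (hPprim.irreducible_iff_irreducible_map_fraction_map (K := K)).mp hPirr
  obtain ⟨c, hc0, U, V, hUV⟩ :=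
    Polynomial.exists_mul_add_mul_eq_C_of_isCoprime_map (hPirrK.coprime_iff_not_dvd.mpr hndvd)
  refine hc0 (eq_zero_of_forall_eval_eq_zero_of_isOpen (isOpen_setOf_sign_change p α β)
    ⟨y, hα, hβ⟩ fun z ⟨hzα, hzβ⟩ ↦ ?_)
  obtain ⟨t, ht⟩ := exists_eval_cons_eq_zero p hzα hzβ
  have hUVz := congr(Polynomial.eval t (Polynomial.map (eval z) $hUV))
  simp only [Polynomial.map_add, Polynomial.map_mul, Polynomial.map_C, Polynomial.eval_add,
    Polynomial.eval_mul, Polynomial.eval_C] at hUVz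
  rw [hP, hQ, ← eval_eq_eval_mv_eval', ← eval_eq_eval_mv_eval', ht, hvan _ ht] at hUVz
  simpa using hUVz.symm

theorem dvd_of_eval_eq_zero_of_sign_change {n : ℕ} {p h : MvPolynomial (Fin n) ℝ}
    (hp : Irreducible p) {a b : Fin n → ℝ} (ha : 0 < eval a p) (hb : eval b p < 0)
    (hvan : ∀ x, eval x p = 0 → eval x h = 0) : p ∣ h := by
  cases n with
  | zero => exact absurd (Subsingleton.elim a b ▸ ha) hb.not_gt
  | succ m =>
    have hab : a - b ≠ 0 := sub_ne_zero.mpr fun hab ↦ (hab ▸ ha).not_gt hb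
    obtain ⟨L, hL⟩ := SeparatingDual.exists_continuousLinearEquiv_apply_eq (R := ℝ)
      (Pi.single_ne_zero_iff.mpr one_ne_zero : Pi.single (0 : Fin (m + 1)) (1 : ℝ) ≠ 0) hab
    set E := linearSubstEquiv L.toLinearEquiv
    have hE (x : Fin (m + 1) → ℝ) (q) : eval x (E q) = eval (L x) q := eval_linearSubstEquiv _ x q
    set z := L.symm b
    have hzb : Fin.cons (z 0) (Fin.tail z) = z := Fin.cons_self_tail z
    have hza : Fin.cons (z 0 + 1) (Fin.tail z) = z + Pi.single 0 1 := by
      ext i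
      cases i using Fin.cases <;> simp [Fin.tail]
    suffices E p ∣ E h from (map_dvd_iff E).mp this
    refine dvd_of_eval_eq_zero_of_sign_change_cons (hp.map E) (y := Fin.tail z) (α := z 0 + 1)
      (β := z 0) ?_ ?_ fun x hx ↦ ?_
    · rwa [hza, hE, map_add, hL, ContinuousLinearEquiv.apply_symm_apply, add_sub_cancel]
    · rwa [hzb, hE, ContinuousLinearEquiv.apply_symm_apply]
    · rw [hE] at hx ⊢
      exact hvan _ hx

end MvPolynomial

theorem eval_eq_zero_of_eval_sum_sq_eq_zero {σ ι : Type*} [Fintype ι] {h : ι → MvPolynomial σ ℝ}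
    {x : σ → ℝ} (hx : eval x (∑ i, h i ^ 2) = 0) (i : ι) : eval x (h i) = 0 := by
  simp only [map_sum, map_pow] at hx
  exact pow_eq_zero_iff two_ne_zero |>.mp <|
    (Finset.sum_eq_zero_iff_of_nonneg fun j _ ↦ sq_nonneg _).mp hx i (mem_univ i)

theorem isSosForms_of_sq_mul_eq_sum_sq {n r k : ℕ} {p f : MvPolynomial (Fin n) ℝ}
    {h : Fin k → MvPolynomial (Fin n) ℝ} (hp : p.IsHomogeneous r) (hp0 : p ≠ 0)
    (hhom : ∀ i, ∃ d, (h i).IsHomogeneous d) (hdvd : ∀ i, p ∣ h i)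
    (hsum : p ^ 2 * f = ∑ i, h i ^ 2) : IsSosForms f := by
  choose g hg using hdvd
  refine ⟨k, g, fun i ↦ ?_, mul_left_cancel₀ (pow_ne_zero 2 hp0) ?_⟩
  · obtain ⟨d, hd⟩ := hhom i
    exact ⟨d - r, hp.of_mul_left hp0 (hg i ▸ hd)⟩
  · simp only [hsum, hg, mul_sum, mul_pow]

theorem psd_not_sos_mul_sq_irred_indef
    (n d r : ℕ) (f p : MvPolynomial (Fin n) ℝ)
    (hf : f.IsHomogeneous (2 * d))
    (hfpsd : ∀ x : Fin n → ℝ, 0 ≤ eval x f)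
    (hfnsos : ¬ IsSosForms f)
    (hp : p.IsHomogeneous r)
    (hpirr : Irreducible p)
    (hpind : (∃ x : Fin n → ℝ, 0 < eval x p) ∧ (∃ y : Fin n → ℝ, eval y p < 0)) :
    (p ^ 2 * f).IsHomogeneous (2 * d + 2 * r) ∧
      (∀ x : Fin n → ℝ, 0 ≤ eval x (p ^ 2 * f)) ∧ ¬ IsSosForms (p ^ 2 * f) := by
  obtain ⟨⟨a, ha⟩, ⟨b, hb⟩⟩ := hpind
  refine ⟨?_, fun x ↦ ?_, ?_⟩
  · simpa only [mul_comm r 2, add_comm] using (hp.pow 2).mul hf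
  · rw [map_mul, map_pow]
    exact mul_nonneg (sq_nonneg _) (hfpsd x)
  · rintro ⟨k, h, hhom, hsum⟩
    refine hfnsos (isSosForms_of_sq_mul_eq_sum_sq hp hpirr.ne_zero hhom (fun i ↦ ?_) hsum)
    refine dvd_of_eval_eq_zero_of_sign_change hpirr ha hb fun x hx ↦ ?_
    exact eval_eq_zero_of_eval_sum_sq_eq_zero (by rw [← hsum, map_mul, map_pow, hx]; ring) i
end

section
/- If f is an even symmetric psd not sos n-ary form of degree 2d (n ≥ 3), then (x_1 x_2 ⋯ x_n)^2 · f is an even symmetric psd not sos form of degree 2d + 2n. -/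
open MvPolynomial Finset

/-- Every variable occurs with even degree in every monomial. -/
def IsEvenForm {n : ℕ} (f : MvPolynomial (Fin n) ℝ) : Prop :=
  ∀ m ∈ f.support, ∀ i, Even (m i)

/-!
If `(x₁ ⋯ xₙ)² f = ∑ hᵢ²`, then on each coordinate hyperplane `xⱼ = 0` the left side vanishes,
and a real sum of squares vanishes only if every term does; so every `hᵢ` is divisible by each
`xⱼ`, hence by the product `x₁ ⋯ xₙ` of these pairwise non-associated primes. Cancelling
`(x₁ ⋯ xₙ)²` turns the representation into one of `f`.
-/

namespace MvPolynomial

variable {σ R : Type*}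

section CommSemiring

variable [CommSemiring R]

theorem prod_X_eq_monomial (s : Finset σ) :
    ∏ i ∈ s, (X i : MvPolynomial σ R) = monomial (∑ i ∈ s, Finsupp.single i 1) 1 :=
  (monomial_sum_one s _).symm

theorem isHomogeneous_prod_X (s : Finset σ) :
    (∏ i ∈ s, (X i : MvPolynomial σ R)).IsHomogeneous #s := by
  simpa using IsHomogeneous.prod s (fun i => (X i : MvPolynomial σ R)) (fun _ => 1)
    fun i _ => isHomogeneous_X R i

theorem isSymmetric_prod_X [Fintype σ] : (∏ i, (X i : MvPolynomial σ R)).IsSymmetric := by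
  intro e
  simp only [map_prod, rename_X]
  exact Equiv.prod_comp e X

theorem IsHomogeneous.of_monomial_one_mul {t : σ →₀ ℕ} {g : MvPolynomial σ R} {e : ℕ}
    (h : (monomial t 1 * g).IsHomogeneous e) : g.IsHomogeneous (e - Finsupp.weight 1 t) := by
  intro s hs
  have hts := h (by rwa [coeff_monomial_mul, one_mul] : coeff (t + s) (monomial t 1 * g) ≠ 0)
  rw [map_add] at hts
  omega

theorem aeval_update_X_zero_eq_modMonomial [DecidableEq σ] (p : MvPolynomial σ R) (j : σ) :
    aeval (Function.update X j (0 : MvPolynomial σ R)) p =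
      p.modMonomial (Finsupp.single j 1) := by
  conv_lhs => rw [← p.divMonomial_add_modMonomial_single j]
  rw [map_add, map_mul, aeval_X, Function.update_self, zero_mul, zero_add]
  refine hom_congr_vars (f₁ := (aeval (Function.update X j (0 : MvPolynomial σ R))).toRingHom)
    (f₂ := RingHom.id _) (by ext; simp) (fun i hi _ => ?_) rfl
  obtain ⟨d, hd, hid⟩ := (mem_vars_iff_mem_support i).1 hi
  have hij : i ≠ j := by
    rintro rfl
    refine mem_support_iff.1 hd (coeff_modMonomial_of_le _ ?_)
    simpa [Nat.one_le_iff_ne_zero] using hid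
  simp [Function.update_of_ne hij]

theorem X_dvd_iff_aeval_update_X_zero_eq_zero [DecidableEq σ] {p : MvPolynomial σ R} {j : σ} :
    X j ∣ p ↔ aeval (Function.update X j (0 : MvPolynomial σ R)) p = 0 := by
  rw [X_dvd_iff_modMonomial_eq_zero, aeval_update_X_zero_eq_modMonomial]

end CommSemiring

theorem pairwise_isRelPrime_X [CommRing R] [IsDomain R] :
    Pairwise fun i j : σ => IsRelPrime (X i : MvPolynomial σ R) (X j) :=
  fun _ _ hij => X_prime.irreducible.isRelPrime_iff_not_dvd.2 (X_dvd_X.not.2 hij)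

section LinearOrderedField

variable [Field R] [LinearOrder R] [IsStrictOrderedRing R]

theorem eq_zero_of_sum_sq_eq_zero {ι : Type*} [Fintype ι] {p : ι → MvPolynomial σ R}
    (h : ∑ i, p i ^ 2 = 0) (i : ι) : p i = 0 := by
  refine MvPolynomial.funext fun x => ?_
  have hx : ∑ i, eval x (p i) ^ 2 = 0 := by simpa using congrArg (eval x) h
  simpa using (Finset.sum_eq_zero_iff_of_nonneg fun i _ => sq_nonneg _).1 hx i (mem_univ i)

theorem prod_X_dvd_of_sum_sq_eq_prod_X_sq_mul [Fintype σ] [DecidableEq σ] {ι : Type*} [Fintype ι]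
    {p : ι → MvPolynomial σ R} {f : MvPolynomial σ R} (h : ∑ i, p i ^ 2 = (∏ j, X j) ^ 2 * f)
    (i : ι) : ∏ j, X j ∣ p i := by
  refine Fintype.prod_dvd_of_isRelPrime pairwise_isRelPrime_X fun j => ?_
  rw [X_dvd_iff_aeval_update_X_zero_eq_zero]
  set φ := aeval (R := R) (Function.update X j (0 : MvPolynomial σ R))
  have hφ : ∑ i, φ (p i) ^ 2 = 0 := by
    simpa [φ, prod_eq_zero (mem_univ j)] using congrArg φ h
  exact eq_zero_of_sum_sq_eq_zero hφ i

end LinearOrderedField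

end MvPolynomial

theorem IsSosForms.of_prod_X_sq_mul {n : ℕ} {f : MvPolynomial (Fin n) ℝ}
    (h : IsSosForms ((∏ i, X i) ^ 2 * f)) : IsSosForms f := by
  obtain ⟨k, p, hhom, hsum⟩ := h
  choose q hq using prod_X_dvd_of_sum_sq_eq_prod_X_sq_mul hsum.symm
  refine ⟨k, q, fun i => ?_, ((isRegular_prod_X univ).pow 2).left ?_⟩
  · obtain ⟨e, he⟩ := hhom i
    rw [hq i, prod_X_eq_monomial] at he
    exact ⟨_, he.of_monomial_one_mul⟩
  · simp only [hsum, hq, mul_pow, mul_sum]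

theorem isEvenForm_monomial {n : ℕ} {m : Fin n →₀ ℕ} (c : ℝ) (h : ∀ i, Even (m i)) :
    IsEvenForm (monomial m c) := by
  intro m' hm'
  rw [mem_support_iff, coeff_monomial] at hm'
  split_ifs at hm' with hmm'
  · exact hmm' ▸ h
  · exact absurd rfl hm'

theorem IsEvenForm.mul {n : ℕ} {p q : MvPolynomial (Fin n) ℝ} (hp : IsEvenForm p)
    (hq : IsEvenForm q) : IsEvenForm (p * q) := by
  intro m hm i
  obtain ⟨a, ha, b, hb, rfl⟩ := Finset.mem_add.1 (support_mul p q hm)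
  exact (hp a ha i).add (hq b hb i)

theorem isEvenForm_prod_X_sq {n : ℕ} : IsEvenForm ((∏ i, X i : MvPolynomial (Fin n) ℝ) ^ 2) := by
  rw [prod_X_eq_monomial, monomial_pow]
  exact isEvenForm_monomial _ fun i => by simp

theorem even_symm_psd_not_sos_mul_prod_sq_general
    (n d : ℕ) (f : MvPolynomial (Fin n) ℝ)
    (hf : f.IsHomogeneous (2 * d))
    (hsym : f.IsSymmetric)
    (heven : IsEvenForm f)
    (hpsd : ∀ x : Fin n → ℝ, 0 ≤ eval x f)
    (hnsos : ¬ IsSosForms f) :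
    ((∏ i, X i) ^ 2 * f).IsHomogeneous (2 * d + 2 * n) ∧
      ((∏ i, X i : MvPolynomial (Fin n) ℝ) ^ 2 * f).IsSymmetric ∧
      IsEvenForm ((∏ i, X i : MvPolynomial (Fin n) ℝ) ^ 2 * f) ∧
      (∀ x : Fin n → ℝ, 0 ≤ eval x ((∏ i, X i) ^ 2 * f)) ∧
      ¬ IsSosForms ((∏ i, X i : MvPolynomial (Fin n) ℝ) ^ 2 * f) := by
  refine ⟨?_, ?_, isEvenForm_prod_X_sq.mul heven, fun x => ?_, fun h => hnsos h.of_prod_X_sq_mul⟩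
  · convert ((isHomogeneous_prod_X univ).pow 2).mul hf using 1
    simp only [card_univ, Fintype.card_fin]
    ring
  · rw [sq]
    exact (isSymmetric_prod_X.mul isSymmetric_prod_X).mul hsym
  · simpa using mul_nonneg (sq_nonneg _) (hpsd x)

theorem even_symm_psd_not_sos_mul_prod_sq
    (n d : ℕ) (hn : 3 ≤ n) (f : MvPolynomial (Fin n) ℝ)
    (hf : f.IsHomogeneous (2 * d))
    (hsym : f.IsSymmetric)
    (heven : IsEvenForm f)
    (hpsd : ∀ x : Fin n → ℝ, 0 ≤ eval x f)
    (hnsos : ¬ IsSosForms f) :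
    ((∏ i, X i) ^ 2 * f).IsHomogeneous (2 * d + 2 * n) ∧
      ((∏ i, X i : MvPolynomial (Fin n) ℝ) ^ 2 * f).IsSymmetric ∧
      IsEvenForm ((∏ i, X i : MvPolynomial (Fin n) ℝ) ^ 2 * f) ∧
      (∀ x : Fin n → ℝ, 0 ≤ eval x ((∏ i, X i) ^ 2 * f)) ∧
      ¬ IsSosForms ((∏ i, X i : MvPolynomial (Fin n) ℝ) ^ 2 * f) :=
  even_symm_psd_not_sos_mul_prod_sq_general n d f hf hsym heven hpsd hnsos
end

section
/- Suppose p is an even form (every variable appears with even degree in each monomial) and p = Σ_{i=1}^r h_i^2 is a sum of squares of forms. Then p can be written as p = Σ_{j=1}^s q_j^2 where each square q_j^2 is an even form; equivalently, each q_j is a linear combination of monomials x^α with all exponent vectors α lying in a single congruence class mod 2 componentwise. -/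
open MvPolynomial Finset

noncomputable def par {n : ℕ} (m : Fin n →₀ ℕ) : Fin n → ZMod 2 := fun i => (m i : ZMod 2)

noncomputable def proj {n : ℕ} (ε : Fin n → ZMod 2) (f : MvPolynomial (Fin n) ℝ) :
    MvPolynomial (Fin n) ℝ :=
  ∑ m ∈ f.support.filter (fun m => par m = ε), monomial m (f.coeff m)

lemma coeff_proj {n : ℕ} (ε : Fin n → ZMod 2) (f : MvPolynomial (Fin n) ℝ) (m : Fin n →₀ ℕ) :
    (proj ε f).coeff m = if par m = ε then f.coeff m else 0 := by
  classical
  rw [proj, coeff_sum]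
  simp only [coeff_monomial]
  rw [Finset.sum_ite_eq' _ m (fun m' => f.coeff m')]
  by_cases hm : m ∈ f.support
  · simp [hm, Finset.mem_filter]
  · simp only [MvPolynomial.notMem_support_iff] at hm
    simp [hm, Finset.mem_filter]

lemma sum_proj {n : ℕ} (f : MvPolynomial (Fin n) ℝ) :
    ∑ ε : Fin n → ZMod 2, proj ε f = f := by
  classical
  rw [show (∑ ε : Fin n → ZMod 2, proj ε f) =
      ∑ m ∈ f.support, monomial m (f.coeff m) from
    Finset.sum_fiberwise_of_maps_to (fun m _ => Finset.mem_univ (par m)) _]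
  exact support_sum_monomial_coeff f

lemma par_mem_proj {n : ℕ} {ε : Fin n → ZMod 2} {f : MvPolynomial (Fin n) ℝ}
    {m : Fin n →₀ ℕ} (hm : m ∈ (proj ε f).support) : par m = ε := by
  by_contra hc
  rw [MvPolynomial.mem_support_iff, coeff_proj, if_neg hc] at hm
  exact hm rfl

lemma proj_homog {n : ℕ} (ε : Fin n → ZMod 2) {f : MvPolynomial (Fin n) ℝ} {d : ℕ}
    (hf : f.IsHomogeneous d) : (proj ε f).IsHomogeneous d := by
  intro m hm
  rw [coeff_proj] at hm
  apply hf
  intro hc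
  rw [hc, if_pos] at hm <;> simp_all

lemma par_mul {n : ℕ} {a b : Fin n → ZMod 2} {f g : MvPolynomial (Fin n) ℝ}
    (hf : ∀ m ∈ f.support, par m = a) (hg : ∀ m ∈ g.support, par m = b) :
    ∀ m ∈ (f * g).support, par m = a + b := by
  classical
  intro m hm
  have := MvPolynomial.support_mul f g hm
  rw [Finset.mem_add] at this
  obtain ⟨m1, h1, m2, h2, rfl⟩ := this
  funext i
  simp only [par, Finsupp.add_apply, Nat.cast_add, Pi.add_apply]
  rw [← hf m1 h1, ← hg m2 h2]; rfl

-- even projection behavior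
lemma proj_eq_self {n : ℕ} {f : MvPolynomial (Fin n) ℝ}
    (hf : ∀ m ∈ f.support, par m = 0) : proj 0 f = f := by
  ext m
  rw [coeff_proj]
  by_cases hm : m ∈ f.support
  · rw [if_pos (hf m hm)]
  · rw [MvPolynomial.notMem_support_iff] at hm
    simp [hm]

lemma proj_eq_zero {n : ℕ} {c : Fin n → ZMod 2} (hc : c ≠ 0) {f : MvPolynomial (Fin n) ℝ}
    (hf : ∀ m ∈ f.support, par m = c) : proj 0 f = 0 := by
  ext m
  rw [coeff_proj, coeff_zero]
  by_cases hm : m ∈ f.support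
  · rw [if_neg]; rw [hf m hm]; exact hc
  · rw [MvPolynomial.notMem_support_iff] at hm
    simp [hm]

lemma proj_sum {n : ℕ} (ε : Fin n → ZMod 2) {α : Type*} (s : Finset α)
    (F : α → MvPolynomial (Fin n) ℝ) :
    proj ε (∑ i ∈ s, F i) = ∑ i ∈ s, proj ε (F i) := by
  ext m
  rw [coeff_proj, coeff_sum]
  split
  · simp only [coeff_sum]
    exact Finset.sum_congr rfl fun i _ => by rw [coeff_proj, if_pos ‹_›]
  · rw [coeff_sum]
    symm
    apply Finset.sum_eq_zero
    intro i _
    rw [coeff_proj, if_neg ‹_›]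

lemma zmod2_add_eq_zero {n : ℕ} (a b : Fin n → ZMod 2) : a + b = 0 ↔ a = b := by
  have key : ∀ x y : ZMod 2, x + y = 0 ↔ x = y := by decide
  constructor
  · intro h; funext i
    exact (key _ _).mp (congrFun h i)
  · rintro rfl; funext i
    exact (key _ _).mpr rfl

theorem even_sos_has_even_squares
    (n r : ℕ) (p : MvPolynomial (Fin n) ℝ)
    (heven : IsEvenForm p)
    (h : Fin r → MvPolynomial (Fin n) ℝ)
    (hforms : ∀ i, ∃ d, (h i).IsHomogeneous d)
    (hsos : p = ∑ i, h i ^ 2) :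
    ∃ (s : ℕ) (q : Fin s → MvPolynomial (Fin n) ℝ),
      (∀ j, ∃ d, (q j).IsHomogeneous d) ∧
      p = ∑ j, q j ^ 2 ∧
      (∀ j, IsEvenForm (q j ^ 2)) ∧
      (∀ j, ∀ m ∈ (q j).support, ∀ m' ∈ (q j).support, ∀ i, m i % 2 = m' i % 2) := by
  classical
  have hp0 : ∀ m ∈ p.support, par m = 0 := by
    intro m hm
    funext i
    obtain ⟨k, hk⟩ := heven m hm i
    simp only [par, Pi.zero_apply, hk, Nat.cast_add]
    generalize (k : ZMod 2) = x
    revert x; decide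
  have term : ∀ (f : MvPolynomial (Fin n) ℝ) (ε ε' : Fin n → ZMod 2),
      proj 0 (proj ε f * proj ε' f) = if ε = ε' then proj ε f * proj ε' f else 0 := by
    intro f ε ε'
    have hmul := par_mul (fun m hm => par_mem_proj hm) (fun m hm => par_mem_proj hm)
      (f := proj ε f) (g := proj ε' f)
    by_cases he : ε = ε'
    · rw [if_pos he]
      apply proj_eq_self
      intro m hm
      rw [hmul m hm, (zmod2_add_eq_zero ε ε').mpr he]
    · rw [if_neg he]
      exact proj_eq_zero (fun hc => he ((zmod2_add_eq_zero _ _).mp hc)) hmul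
  have key : p = ∑ i, ∑ ε : Fin n → ZMod 2, (proj ε (h i)) ^ 2 := by
    calc p = proj 0 p := (proj_eq_self hp0).symm
    _ = proj 0 (∑ i, (h i) ^ 2) := by rw [← hsos]
    _ = ∑ i, proj 0 ((h i) ^ 2) := proj_sum _ _ _
    _ = ∑ i, ∑ ε : Fin n → ZMod 2, (proj ε (h i)) ^ 2 := by
        refine Finset.sum_congr rfl fun i _ => ?_
        conv_lhs => rw [show h i = ∑ ε : Fin n → ZMod 2, proj ε (h i) from (sum_proj _).symm]
        rw [sq, Finset.sum_mul_sum, proj_sum]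
        rw [Finset.sum_congr rfl fun ε _ => proj_sum (0 : Fin n → ZMod 2) Finset.univ
          (fun ε' => proj ε (h i) * proj ε' (h i))]
        refine Finset.sum_congr rfl fun ε _ => ?_
        rw [Finset.sum_congr rfl fun ε' _ => term (h i) ε ε', Finset.sum_ite_eq, if_pos (Finset.mem_univ ε), sq]
  set V := Fin r × ((Fin n) → ZMod 2) with hV
  let e : V ≃ Fin (Fintype.card V) := Fintype.equivFin V
  refine ⟨Fintype.card V, fun j => proj (e.symm j).2 (h (e.symm j).1), ?_, ?_, ?_, ?_⟩
  · intro j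
    obtain ⟨d, hd⟩ := hforms (e.symm j).1
    exact ⟨d, proj_homog _ hd⟩
  · rw [key]
    calc ∑ i, ∑ ε : Fin n → ZMod 2, (proj ε (h i)) ^ 2
        = ∑ v : V, (proj v.2 (h v.1)) ^ 2 :=
          (Fintype.sum_prod_type (f := fun v : V => (proj v.2 (h v.1)) ^ 2)).symm
      _ = ∑ j : Fin (Fintype.card V), (proj ((e.symm j).2) (h (e.symm j).1)) ^ 2 :=
          (Equiv.sum_comp e.symm (fun v : V => (proj v.2 (h v.1)) ^ 2)).symm
  · intro j m hm i
    set ε := (e.symm j).2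
    set f := h (e.symm j).1
    rw [sq] at hm
    have hpar := par_mul (fun m hm => par_mem_proj hm) (fun m hm => par_mem_proj hm)
      (f := proj ε f) (g := proj ε f) m hm
    rw [(zmod2_add_eq_zero ε ε).mpr rfl] at hpar
    have : ((m i : ℕ) : ZMod 2) = 0 := congrFun hpar i
    rw [show (0 : ZMod 2) = ((0 : ℕ) : ZMod 2) from rfl, ZMod.natCast_eq_natCast_iff'] at this
    rw [Nat.even_iff]
    omega
  · intro j m hm m' hm' i
    have h1 := par_mem_proj hm
    have h2 := par_mem_proj hm'
    have : ((m i : ℕ) : ZMod 2) = ((m' i : ℕ) : ZMod 2) := by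
      rw [show ((m i : ℕ) : ZMod 2) = par m i from rfl, h1, ← h2]; rfl
    rwa [ZMod.natCast_eq_natCast_iff'] at this
end

section
/- Let g ∈ ℝ[x_1,…,x_n] and define f(x_1,…,x_n) = g(x_1^2,…,x_n^2). Then f is a sum of squares of polynomials if and only if g belongs to the preordering generated by x_1,…,x_n, i.e., g can be written as Σ_{e ∈ {0,1}^n} σ_e · x_1^{e_1} ⋯ x_n^{e_n} with each σ_e a sum of squares of polynomials. -/
open MvPolynomial Finset

/-- Sum of squares of polynomials. -/
def IsSos {n : ℕ} (f : MvPolynomial (Fin n) ℝ) : Prop :=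
  ∃ (k : ℕ) (h : Fin k → MvPolynomial (Fin n) ℝ), f = ∑ i, h i ^ 2

/-- Membership in the preordering generated by x_1, …, x_n. -/
def InPreordering {n : ℕ} (g : MvPolynomial (Fin n) ℝ) : Prop :=
  ∃ σ : (Fin n → Bool) → MvPolynomial (Fin n) ℝ,
    (∀ e, IsSos (σ e)) ∧
    g = ∑ e : Fin n → Bool, σ e * ∏ i, if e i then X i else 1

/-! If `g(x²) = ∑ᵢ hᵢ²`, sort the monomials of each `hᵢ` by the parities of their exponents:
`hᵢ = ∑ₑ xᵉ hᵢₑ(x²)` over `e ∈ {0,1}ⁿ`. The left side is invariant under every sign change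
`xⱼ ↦ ± xⱼ`, while the sign change on a set `S` multiplies the term `xᵉ xᵉ' hᵢₑ(x²) hᵢₑ'(x²)` of
`hᵢ²` by `∏_{j ∈ S} (-1)^(eⱼ + e'ⱼ)`. Summing over all `2ⁿ` sign changes therefore kills the cross
terms and leaves `g(x²) = ∑ₑ x²ᵉ ∑ᵢ hᵢₑ(x²)²`, so `g = ∑ₑ xᵉ ∑ᵢ hᵢₑ²` because `p ↦ p(x²)` is
injective. The converse is the identity `(xᵉ)² = x²ᵉ`. -/

theorem isSumSq_iff_exists_fin_sum_sq {R : Type*} [CommSemiring R] {a : R} :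
    IsSumSq a ↔ ∃ (k : ℕ) (h : Fin k → R), a = ∑ i, h i ^ 2 := by
  refine ⟨fun ha => ?_, fun ⟨k, h, ha⟩ => ha ▸ IsSumSq.sum_sq _ _⟩
  induction ha with
  | zero => exact ⟨0, Fin.elim0, by simp⟩
  | sq_add a _ ih =>
    obtain ⟨k, h, rfl⟩ := ih
    exact ⟨k + 1, Fin.cons a h, by simp [Fin.sum_univ_succ, sq]⟩

theorem IsSumSq.map {R S F : Type*} [CommSemiring R] [CommSemiring S] [FunLike F R S]
    [RingHomClass F R S] (f : F) {a : R} (ha : IsSumSq a) : IsSumSq (f a) := by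
  induction ha with
  | zero => simp
  | sq_add a _ ih => simpa using ih.sq_add (f a)

namespace MvPolynomial

section CommSemiring

variable {σ R : Type*} [Fintype σ] [CommSemiring R]

noncomputable def boolMonomial (e : σ → Bool) : MvPolynomial σ R :=
  ∏ i, if e i then X i else 1

theorem expand_two_boolMonomial (e : σ → Bool) :
    expand 2 (boolMonomial e : MvPolynomial σ R) = boolMonomial e ^ 2 := by
  simp only [boolMonomial, map_prod, ← prod_pow]
  exact prod_congr rfl fun i _ => by cases e i <;> simp

theorem monomial_eq_boolMonomial_mul_expand_two (d : σ →₀ ℕ) (r : R) :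
    monomial d r = boolMonomial (fun i => (d i).bodd) *
      expand 2 (monomial (Finsupp.mapRange Nat.div2 Nat.div2_zero d) r) := by
  rw [expand_monomial, monomial_eq, monomial_eq, Finsupp.prod_fintype _ _ (fun _ => pow_zero _),
    Finsupp.prod_fintype _ _ (fun _ => pow_zero _), boolMonomial, mul_left_comm,
    ← prod_mul_distrib]
  congr 1
  refine prod_congr rfl fun i _ => ?_
  conv_lhs => rw [← Nat.bodd_add_div2 (d i)]
  cases (d i).bodd <;> simp [pow_add, pow_mul]

theorem exists_eq_sum_boolMonomial_mul_expand_two [DecidableEq σ] (p : MvPolynomial σ R) :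
    ∃ q : (σ → Bool) → MvPolynomial σ R, p = ∑ e, boolMonomial e * expand 2 (q e) := by
  induction p using MvPolynomial.induction_on' with
  | monomial d r =>
    refine ⟨Pi.single (fun i => (d i).bodd)
      (monomial (Finsupp.mapRange Nat.div2 Nat.div2_zero d) r), ?_⟩
    rw [Fintype.sum_eq_single (fun i => (d i).bodd) fun e he => by simp [he],
      Pi.single_eq_same, monomial_eq_boolMonomial_mul_expand_two]
  | add p p' hp hp' =>
    obtain ⟨q, rfl⟩ := hp
    obtain ⟨q', rfl⟩ := hp'
    exact ⟨q + q', by simp only [Pi.add_apply, map_add, mul_add, sum_add_distrib]⟩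

theorem isSumSq_expand_two_sum_mul_boolMonomial [DecidableEq σ]
    {τ : (σ → Bool) → MvPolynomial σ R} (hτ : ∀ e, IsSumSq (τ e)) :
    IsSumSq (expand 2 (∑ e, τ e * boolMonomial e)) := by
  simp only [map_sum, map_mul, expand_two_boolMonomial]
  exact IsSumSq.sum fun e _ => ((hτ e).map _).mul (IsSquare.sq _).isSumSq

end CommSemiring

section CommRing

variable {σ R : Type*} [CommRing R]

noncomputable def signFlip (s : σ → Bool) : MvPolynomial σ R →ₐ[R] MvPolynomial σ R :=
  bind₁ fun i => if s i then -X i else X i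

def boolSign [Fintype σ] (s e : σ → Bool) : R :=
  ∏ i, if s i && e i then -1 else 1

theorem signFlip_expand_two (s : σ → Bool) (p : MvPolynomial σ R) :
    signFlip s (expand 2 p) = expand 2 p := by
  induction p using MvPolynomial.induction_on with
  | C a => simp [signFlip]
  | add p q hp hq => simp only [map_add, hp, hq]
  | mul_X p i hp => cases s i <;> simp_all [signFlip]

theorem signFlip_boolMonomial [Fintype σ] (s e : σ → Bool) :
    signFlip s (boolMonomial e : MvPolynomial σ R) = C (boolSign s e) * boolMonomial e := by
  simp only [boolMonomial, boolSign, map_prod, ← prod_mul_distrib]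
  exact prod_congr rfl fun i _ => by cases hs : s i <;> cases e i <;> simp [signFlip, hs]

theorem sum_boolSign_mul_boolSign [Fintype σ] [DecidableEq σ] (e e' : σ → Bool) :
    ∑ s, (boolSign s e * boolSign s e' : R) = if e = e' then 2 ^ Fintype.card σ else 0 := by
  simp only [boolSign, ← prod_mul_distrib]
  rw [← Fintype.prod_sum fun i (b : Bool) =>
    ((if b && e i then -1 else 1) * (if b && e' i then -1 else 1) : R)]
  have coord (i : σ) : ∑ b : Bool, ((if b && e i then -1 else 1) *
      (if b && e' i then -1 else 1) : R) = if e i = e' i then 2 else 0 := by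
    cases e i <;> cases e' i <;> norm_num
  simp only [coord]
  split_ifs with h
  · simp [h]
  · obtain ⟨i, hi⟩ := Function.ne_iff.mp h
    exact prod_eq_zero (mem_univ i) (if_neg hi)

theorem sum_signFlip_expand_two [Fintype σ] [DecidableEq σ] (p : MvPolynomial σ R) :
    ∑ s : σ → Bool, signFlip s (expand 2 p) = 2 ^ Fintype.card σ • expand 2 p := by
  simp [signFlip_expand_two]

theorem sum_signFlip_boolMonomial_mul_boolMonomial_mul_expand_two [Fintype σ]
    [DecidableEq σ] (e e' : σ → Bool) (r : MvPolynomial σ R) :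
    ∑ s, signFlip s (boolMonomial e * boolMonomial e' * expand 2 r) =
      if e = e' then 2 ^ Fintype.card σ • (boolMonomial e * boolMonomial e' * expand 2 r)
      else 0 := by
  have hs (s : σ → Bool) : signFlip s (boolMonomial e * boolMonomial e' * expand 2 r) =
      C (boolSign s e * boolSign s e') * (boolMonomial e * boolMonomial e' * expand 2 r) := by
    simp only [map_mul, signFlip_boolMonomial, signFlip_expand_two]
    ring
  simp only [hs, ← sum_mul, ← map_sum, sum_boolSign_mul_boolSign]
  split_ifs <;> simp [map_ofNat C]

theorem sum_signFlip_sq [Fintype σ] [DecidableEq σ] (q : (σ → Bool) → MvPolynomial σ R) :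
    ∑ s, signFlip s ((∑ e, boolMonomial e * expand 2 (q e)) ^ 2) =
      2 ^ Fintype.card σ • expand 2 (∑ e, q e ^ 2 * boolMonomial e) := by
  have hsq : (∑ e, boolMonomial e * expand 2 (q e)) ^ 2 =
      ∑ e, ∑ e', boolMonomial e * boolMonomial e' * expand 2 (q e * q e') := by
    rw [sq, sum_mul_sum]
    exact sum_congr rfl fun e _ => sum_congr rfl fun e' _ => by rw [map_mul]; ring
  calc ∑ s, signFlip s ((∑ e, boolMonomial e * expand 2 (q e)) ^ 2)
      = ∑ e, ∑ e', ∑ s,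
          signFlip s (boolMonomial e * boolMonomial e' * expand 2 (q e * q e')) := by
        simp only [hsq, map_sum]
        rw [sum_comm]
        exact sum_congr rfl fun e _ => sum_comm
    _ = ∑ e, 2 ^ Fintype.card σ • (boolMonomial e * boolMonomial e * expand 2 (q e * q e)) := by
        simp only [sum_signFlip_boolMonomial_mul_boolMonomial_mul_expand_two, sum_ite_eq,
          mem_univ, if_true]
    _ = 2 ^ Fintype.card σ • expand 2 (∑ e, q e ^ 2 * boolMonomial e) := by
        simp only [map_sum, map_mul, map_pow, expand_two_boolMonomial, smul_sum]
        exact sum_congr rfl fun e _ => by ring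

theorem exists_eq_sum_sum_sq_mul_boolMonomial [Fintype σ] [DecidableEq σ] [IsDomain R]
    [CharZero R] {ι : Type*} [Fintype ι] {g : MvPolynomial σ R} {h : ι → MvPolynomial σ R}
    (hg : expand 2 g = ∑ i, h i ^ 2) :
    ∃ q : ι → (σ → Bool) → MvPolynomial σ R, g = ∑ e, (∑ i, q i e ^ 2) * boolMonomial e := by
  choose q hq using fun i => exists_eq_sum_boolMonomial_mul_expand_two (h i)
  refine ⟨q, expand_injective two_pos <|
    nsmul_right_injective (n := 2 ^ Fintype.card σ) (pow_ne_zero _ two_ne_zero) ?_⟩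
  calc 2 ^ Fintype.card σ • expand 2 g = ∑ s, signFlip s (expand 2 g) :=
        (sum_signFlip_expand_two g).symm
    _ = ∑ i, ∑ s, signFlip s ((∑ e, boolMonomial e * expand 2 (q i e)) ^ 2) := by
        rw [hg, sum_comm]
        simp only [map_sum, ← hq]
    _ = 2 ^ Fintype.card σ • expand 2 (∑ e, (∑ i, q i e ^ 2) * boolMonomial e) := by
        simp only [sum_signFlip_sq, ← smul_sum, ← map_sum, sum_mul]
        rw [sum_comm]

end CommRing

end MvPolynomial

theorem isSos_iff_isSumSq {n : ℕ} {f : MvPolynomial (Fin n) ℝ} : IsSos f ↔ IsSumSq f :=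
  isSumSq_iff_exists_fin_sum_sq.symm

theorem sos_of_squares_iff_preordering (n : ℕ) (g : MvPolynomial (Fin n) ℝ) :
    IsSos (bind₁ (fun i : Fin n => (X i : MvPolynomial (Fin n) ℝ) ^ 2) g) ↔
      InPreordering g := by
  change IsSos (expand 2 g) ↔ _
  constructor
  · rintro ⟨k, h, hg⟩
    obtain ⟨q, rfl⟩ := exists_eq_sum_sum_sq_mul_boolMonomial hg
    exact ⟨fun e => ∑ i, q i e ^ 2, fun e => ⟨k, fun i => q i e, rfl⟩, rfl⟩
  · rintro ⟨τ, hτ, rfl⟩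
    exact isSos_iff_isSumSq.2 <|
      isSumSq_expand_two_sum_mul_boolMonomial fun e => isSos_iff_isSumSq.1 (hτ e)
end
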